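/- Let K be a field and n ≥ 3. Let H be a linear hyperplane of M_n(K) (i.e., a linear subspace of dimension n² - 1). Then every matrix of M_n(K) is a product BC of two matrices B, C ∈ H. -/

import Mathlib

/-!
Write `H = {X | trace (A * X) = 0}`. If `B * C = 1`, `trace (A * B) = 0` and
`trace (M * A * C) = 0`, then `M = B * (C * M)` with both factors in `H`. Finding, for given `A`
and `W`, a pair `B * C = 1` with `trace (A * B) = 0 = trace (W * C)` is a problem invariant under
`(A, W, B, C) ↦ (P * A * Q, Q⁻¹ * W * P⁻¹, Q⁻¹ * B * P⁻¹, P * C * Q)`, so `A` may be taken diagonal,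
and then any `B` with zero diagonal meets the first condition. Start from the permutation matrix
of a fixed-point-free `σ` whose square is also fixed-point-free (this needs `3 ≤ n`). Multiplying
`B` on the right by `1 + s E_{kl}` with `B l k = 0` keeps its diagonal zero and changes
`trace (W * C)` by `-s * (C * W) l k`, so one such step finishes once this slope is nonzero: a
nonzero diagonal entry of `W` provides the slope directly, otherwise a preliminary step with
`s = 1` does.
-/

theorem Submodule.exists_dual_ker_eq_of_finrank_add_one {K V : Type*} [DivisionRing K]
    [AddCommGroup V] [Module K V] [FiniteDimensional K V] {H : Submodule K V}
    (hH : Module.finrank K H + 1 = Module.finrank K V) :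
    ∃ φ : Module.Dual K V, LinearMap.ker φ = H := by
  have hlt : H < ⊤ := by
    refine lt_top_iff_ne_top.mpr fun htop => ?_
    rw [htop, finrank_top] at hH
    omega
  obtain ⟨φ, hφ, hHφ⟩ := H.exists_dual_map_eq_bot_of_lt_top hlt inferInstance
  refine ⟨φ, (Submodule.eq_of_le_of_finrank_eq (LinearMap.le_ker_iff_map.mpr hHφ) ?_).symm⟩
  have := Module.Dual.finrank_ker_add_one_of_ne_zero hφ
  omega

theorem Fin.exists_derangement_apply_apply_ne_and_apply_ne {n : ℕ} (hn : 3 ≤ n) (r k : Fin n) :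
    ∃ σ : Equiv.Perm (Fin n), (∀ i, σ i ≠ i) ∧ σ (σ k) ≠ k ∧ σ r ≠ k := by
  obtain ⟨m, rfl⟩ : ∃ m, n = m + 3 := ⟨n - 3, by omega⟩
  set ρ := finRotate (m + 3)
  have hρ : ∀ i, ρ i ≠ i := fun i => by simp [ρ, finRotate_apply]
  have hρρ : ∀ i, ρ (ρ i) ≠ i := fun i => by
    simp [ρ, finRotate_apply, add_assoc, Fin.ext_iff, Fin.val_add, Nat.mod_eq_of_lt]
  by_cases hr : ρ r = k
  · refine ⟨ρ⁻¹, fun i h => hρ i ?_, fun h => hρρ k ?_, fun h => hρρ k ?_⟩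
    · simpa using congrArg ρ h.symm
    · simpa using (congrArg (ρ ∘ ρ) h).symm
    · rw [show ρ k = r by rw [← h]; simp, hr]
  · exact ⟨ρ, hρ, hρρ k, hr⟩

namespace Matrix

section CommRing

variable {R ι : Type*} [CommRing R] [DecidableEq ι]

theorem permMatrix_apply_eq_zero {σ : Equiv.Perm ι} {i j : ι} (h : σ i ≠ j) :
    σ.permMatrix R i j = 0 := by
  simp only [Equiv.Perm.permMatrix, PEquiv.toMatrix_toPEquiv_apply]
  exact Pi.single_eq_of_ne h.symm _

variable [Fintype ι]

theorem permMatrix_mul_permMatrix_inv (σ : Equiv.Perm ι) :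
    σ.permMatrix R * σ⁻¹.permMatrix R = 1 := by
  rw [← permMatrix_mul, inv_mul_cancel, permMatrix_one]

theorem permMatrix_inv_mul_apply (σ : Equiv.Perm ι) (W : Matrix ι ι R) (i j : ι) :
    (σ⁻¹.permMatrix R * W) i j = W (σ⁻¹ i) j := by
  rw [PEquiv.toMatrix_toPEquiv_mul, submatrix_apply, id]

theorem exists_forall_dual_apply_eq_trace_mul (φ : Module.Dual R (Matrix ι ι R)) :
    ∃ A : Matrix ι ι R, ∀ X, φ X = trace (A * X) := by
  refine ⟨of fun i j => φ (single j i 1), fun X => ?_⟩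
  conv_lhs => rw [matrix_eq_sum_single X]
  simp only [map_sum, trace, diag_apply, mul_apply, of_apply]
  rw [Finset.sum_comm]
  refine Finset.sum_congr rfl fun i _ => Finset.sum_congr rfl fun j _ => ?_
  rw [show single j i (X j i) = X j i • single j i (1 : R) by rw [smul_single, smul_eq_mul, mul_one],
    map_smul, smul_eq_mul, mul_comm]

theorem trace_diagonal_mul_eq_zero {B : Matrix ι ι R} (hB : ∀ i, B i i = 0) (δ : ι → R) :
    trace (diagonal δ * B) = 0 := by
  simp [trace, diagonal_mul, hB]

variable {B C : Matrix ι ι R} {k l : ι}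

theorem mul_transvection_mul_transvection_neg_mul (hBC : B * C = 1) (hkl : k ≠ l) (s : R) :
    B * transvection k l s * (transvection k l (-s) * C) = 1 := by
  rw [Matrix.mul_assoc, ← Matrix.mul_assoc (transvection k l s),
    transvection_mul_transvection_same k l hkl, add_neg_cancel, transvection_zero,
    Matrix.one_mul, hBC]

theorem mul_transvection_apply_self_eq_zero (hB : ∀ i, B i i = 0) (hBlk : B l k = 0) (s : R)
    (i : ι) : (B * transvection k l s) i i = 0 := by
  by_cases hil : i = l
  · subst hil
    rw [mul_transvection_apply_same, hB, hBlk, mul_zero, add_zero]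
  · rw [mul_transvection_apply_of_ne k l _ _ hil, hB]

theorem trace_mul_transvection_neg_mul (W C : Matrix ι ι R) (s : R) :
    trace (W * (transvection k l (-s) * C)) = trace (W * C) - s * (C * W) l k := by
  rw [transvection, Matrix.add_mul, Matrix.one_mul, Matrix.mul_add, trace_add,
    ← Matrix.mul_assoc, trace_mul_cycle, trace_mul_single]
  simp [sub_eq_add_neg, mul_comm]

end CommRing

variable {K : Type*} [Field K]

theorem exists_diag_eq_zero_trace_mul_eq_zero_of_apply_ne_zero {ι : Type*} [Fintype ι]
    [DecidableEq ι] {B C : Matrix ι ι K} {k l : ι} (W : Matrix ι ι K) (hBC : B * C = 1)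
    (hB : ∀ i, B i i = 0) (hkl : k ≠ l) (hBlk : B l k = 0) (hCW : (C * W) l k ≠ 0) :
    ∃ B' C' : Matrix ι ι K, B' * C' = 1 ∧ (∀ i, B' i i = 0) ∧ trace (W * C') = 0 := by
  set s := trace (W * C) / (C * W) l k
  refine ⟨B * transvection k l s, transvection k l (-s) * C,
    mul_transvection_mul_transvection_neg_mul hBC hkl s,
    mul_transvection_apply_self_eq_zero hB hBlk s, ?_⟩
  rw [trace_mul_transvection_neg_mul, div_mul_cancel₀ _ hCW, sub_self]

variable {n : ℕ}

theorem exists_diag_eq_zero_trace_mul_eq_zero (hn : 3 ≤ n) (W : Matrix (Fin n) (Fin n) K) :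
    ∃ B C : Matrix (Fin n) (Fin n) K, B * C = 1 ∧ (∀ i, B i i = 0) ∧ trace (W * C) = 0 := by
  by_cases hW : W = 0
  · obtain ⟨σ, hσ, -⟩ :=
      Fin.exists_derangement_apply_apply_ne_and_apply_ne hn ⟨0, by omega⟩ ⟨0, by omega⟩
    exact ⟨_, _, permMatrix_mul_permMatrix_inv σ, fun i => permMatrix_apply_eq_zero (hσ i),
      by rw [hW, Matrix.zero_mul, trace_zero]⟩
  by_cases hdiag : ∃ k, W k k ≠ 0
  · obtain ⟨k, hk⟩ := hdiag
    obtain ⟨σ, hσ, hσσ, -⟩ := Fin.exists_derangement_apply_apply_ne_and_apply_ne hn k k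
    refine exists_diag_eq_zero_trace_mul_eq_zero_of_apply_ne_zero (l := σ k) W
      (permMatrix_mul_permMatrix_inv σ) (fun i => permMatrix_apply_eq_zero (hσ i)) (hσ k).symm
      (permMatrix_apply_eq_zero hσσ) ?_
    simpa [permMatrix_inv_mul_apply] using hk
  simp only [ne_eq, not_exists, not_not] at hdiag
  obtain ⟨r, k, hrk⟩ : ∃ r k, W r k ≠ 0 := by
    by_contra! h
    exact hW (Matrix.ext h)
  obtain ⟨σ, hσ, hσσ, hσr⟩ := Fin.exists_derangement_apply_apply_ne_and_apply_ne hn r k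
  have hkr : σ k ≠ σ r := fun h => by
    obtain rfl := σ.injective h
    exact hrk (hdiag k)
  -- The first transvection makes the slope `W k k - W r k = - W r k`.
  refine exists_diag_eq_zero_trace_mul_eq_zero_of_apply_ne_zero (l := σ k) W
    (mul_transvection_mul_transvection_neg_mul (permMatrix_mul_permMatrix_inv σ) hkr 1)
    (mul_transvection_apply_self_eq_zero (fun i => permMatrix_apply_eq_zero (hσ i))
      (permMatrix_apply_eq_zero fun h => hσr (σ.injective h)) 1)
    (hσ k).symm ?_ ?_
  · rw [mul_transvection_apply_of_ne _ _ _ _ (Ne.symm hσr)]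
    exact permMatrix_apply_eq_zero hσσ
  · rw [Matrix.mul_assoc, transvection_mul_apply_same, permMatrix_inv_mul_apply,
      permMatrix_inv_mul_apply]
    simpa [hdiag] using hrk

theorem exists_mul_eq_one_trace_mul_eq_zero (hn : 3 ≤ n) (A W : Matrix (Fin n) (Fin n) K) :
    ∃ B C : Matrix (Fin n) (Fin n) K, B * C = 1 ∧ trace (A * B) = 0 ∧ trace (W * C) = 0 := by
  obtain ⟨L, L', δ, hLL'⟩ := Pivot.exists_list_transvec_mul_mul_list_transvec_eq_diagonal A
  set P := (L.map TransvectionStruct.toMatrix).prod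
  set Q := (L'.map TransvectionStruct.toMatrix).prod
  set P' := (L.reverse.map (TransvectionStruct.toMatrix ∘ TransvectionStruct.inv)).prod
  set Q' := (L'.reverse.map (TransvectionStruct.toMatrix ∘ TransvectionStruct.inv)).prod
  have hPP' : P * P' = 1 := TransvectionStruct.prod_mul_reverse_inv_prod L
  have hQQ' : Q * Q' = 1 := TransvectionStruct.prod_mul_reverse_inv_prod L'
  obtain ⟨B, C, hBC, hB, hC⟩ := exists_diag_eq_zero_trace_mul_eq_zero hn (Q' * W * P')
  refine ⟨Q * B * P, P' * C * Q', ?_, ?_, ?_⟩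
  · calc Q * B * P * (P' * C * Q') = Q * (B * (P * P') * C) * Q' := by noncomm_ring
      _ = 1 := by rw [hPP', Matrix.mul_one, hBC, Matrix.mul_one, hQQ']
  · rw [← Matrix.mul_assoc, trace_mul_cycle, ← Matrix.mul_assoc, hLL']
    exact trace_diagonal_mul_eq_zero hB δ
  · rw [← Matrix.mul_assoc, ← Matrix.mul_assoc, trace_mul_cycle, ← Matrix.mul_assoc]
    exact hC

end Matrix

theorem hyperplane_product_of_two (K : Type*) [Field K] (n : ℕ) (hn : 3 ≤ n)
    (H : Submodule K (Matrix (Fin n) (Fin n) K))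
    (hH : Module.finrank K H = n ^ 2 - 1) (M : Matrix (Fin n) (Fin n) K) :
    ∃ B ∈ H, ∃ C ∈ H, M = B * C := by
  obtain ⟨φ, hφ⟩ := Submodule.exists_dual_ker_eq_of_finrank_add_one (H := H) (by
    rw [hH, Module.finrank_matrix, Module.finrank_self, Fintype.card_fin, mul_one, ← sq]
    have : 1 ≤ n ^ 2 := Nat.one_le_pow _ _ (by omega)
    omega)
  obtain ⟨A, hA⟩ := Matrix.exists_forall_dual_apply_eq_trace_mul φ
  have hmem : ∀ X, Matrix.trace (A * X) = 0 → X ∈ H := fun X hX => by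
    rw [← hφ, LinearMap.mem_ker, hA, hX]
  obtain ⟨B, C, hBC, hB, hC⟩ := Matrix.exists_mul_eq_one_trace_mul_eq_zero hn A (M * A)
  refine ⟨B, hmem B hB, C * M, hmem _ ?_, by rw [← Matrix.mul_assoc, hBC, Matrix.one_mul]⟩
  rwa [Matrix.trace_mul_cycle', ← Matrix.mul_assoc]
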